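/- arXiv:1612.02775 — 2 statements merged into one kernel-verified Lean document; each statement's English description precedes it below -/
import Mathlib

section
/- Fix ν ∈ S¹ and assume that for every M ∈ ℕ the limit φ^{1,M}(ν) = lim_{t→∞} (1/t)·m_{[0,M]}(u_{0,ν}, Q_ν(0,t)) exists. Then the limit φ¹(ν) = lim_{M→∞} φ^{1,M}(ν)/M exists and is finite. -/
open scoped ENNReal Classical
open Filter

/-- The canonical embedding of `ℤ³` into Euclidean `ℝ³`. -/
noncomputable def toR3 (x : ℤ × ℤ × ℤ) : EuclideanSpace ℝ (Fin 3) :=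
  (WithLp.equiv 2 (Fin 3 → ℝ)).symm ![(x.1 : ℝ), (x.2.1 : ℝ), (x.2.2 : ℝ)]

/-- The canonical embedding of `ℤ²` into Euclidean `ℝ²`. -/
noncomputable def toR2 (x : ℤ × ℤ) : EuclideanSpace ℝ (Fin 2) :=
  (WithLp.equiv 2 (Fin 2 → ℝ)).symm ![(x.1 : ℝ), (x.2 : ℝ)]

/-- The projection `P₂ : ℤ³ → ℤ²` onto the first two coordinates. -/
def P2z (x : ℤ × ℤ × ℤ) : ℤ × ℤ := (x.1, x.2.1)

/-- The rotation of `ν` by `π/2`, giving the second side direction of the square `Q_ν`. -/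
noncomputable def rotDir (ν : EuclideanSpace ℝ (Fin 2)) : EuclideanSpace ℝ (Fin 2) :=
  (WithLp.equiv 2 (Fin 2 → ℝ)).symm ![-(ν 1), ν 0]

/-- The open square `Q_ν(0,t) ⊂ ℝ²` centered at `0` with side length `t` and one pair of
sides orthogonal to `ν`. -/
noncomputable def sqQ (ν : EuclideanSpace ℝ (Fin 2)) (t : ℝ) :
    Set (EuclideanSpace ℝ (Fin 2)) :=
  {x | |@inner ℝ _ _ x ν| < t / 2 ∧ |@inner ℝ _ _ x (rotDir ν)| < t / 2}

/-- The jump configuration `u_{0,ν}`: equal to `1` where `⟨x,ν⟩ ≥ 0` and `-1` elsewhere. -/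
noncomputable def u0 (ν : EuclideanSpace ℝ (Fin 2)) (x : EuclideanSpace ℝ (Fin 2)) : ℝ :=
  if 0 ≤ @inner ℝ _ _ x ν then 1 else -1

/-- The slab energy `E_{[N,M]}(u,O)`: sum of `c(x-y)|u(x)-u(y)|` over pairs
`x, y ∈ ℤ² × {N,…,M}` with `P₂x, P₂y ∈ O`. -/
noncomputable def Eslab (c : EuclideanSpace ℝ (Fin 3) → ℝ) (N M : ℤ)
    (u : ℤ × ℤ × ℤ → ℝ) (O : Set (EuclideanSpace ℝ (Fin 2))) : ℝ≥0∞ :=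
  ∑' x : ℤ × ℤ × ℤ, ∑' y : ℤ × ℤ × ℤ,
    if N ≤ x.2.2 ∧ x.2.2 ≤ M ∧ N ≤ y.2.2 ∧ y.2.2 ≤ M ∧
        toR2 (P2z x) ∈ O ∧ toR2 (P2z y) ∈ O then
      ENNReal.ofReal (c (toR3 x - toR3 y) * |u x - u y|) else 0

/-- Admissibility for the minimum problem on `Q_ν(0,t)`: `u` is `{±1}`-valued and agrees
with `u_{0,ν}∘P₂` at all points whose projection is within distance `2L` of `∂Q_ν(0,t)`. -/
def BCslab (L : ℝ) (ν : EuclideanSpace ℝ (Fin 2)) (t : ℝ) (u : ℤ × ℤ × ℤ → ℝ) : Prop :=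
  (∀ x, u x = 1 ∨ u x = -1) ∧
  ∀ x : ℤ × ℤ × ℤ, Metric.infDist (toR2 (P2z x)) (frontier (sqQ ν t)) ≤ 2 * L →
    u x = u0 ν (toR2 (P2z x))

/-- The minimum value `m_{[N,M]}(u_{0,ν}, Q_ν(0,t))`. -/
noncomputable def mSlab (c : EuclideanSpace ℝ (Fin 3) → ℝ) (L : ℝ)
    (ν : EuclideanSpace ℝ (Fin 2)) (N M : ℤ) (t : ℝ) : ℝ :=
  (⨅ u : {u : ℤ × ℤ × ℤ → ℝ // BCslab L ν t u}, Eslab c N M u (sqQ ν t)).toReal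

/-!
Every competitor `u` for the slab `[0, m + n + 1]` restricts to competitors for the disjoint
slabs `[0, m]` and `[m + 1, m + n + 1]`, and the second is a vertical translate of the slab
`[0, n]`; dropping the interactions between the two slabs gives
`m_{[0,m]} + m_{[0,n]} ≤ m_{[0,m+n+1]}`, so `M ↦ φ^{1,M}` is superadditive in the number
`M + 1` of layers. The jump `u_{0,ν}` is itself a competitor, and since `c` has range `L`
its energy only involves the `O((M + 1) t)` lattice points of the slab within distance `L` of
the interface, each interacting with `O(1)` points; hence `φ^{1,M} ≤ K (M + 1)`. Fekete's
lemma now gives the limit of `φ^{1,M} / M`.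
-/

open Topology

theorem exists_tendsto_div_of_superadditive {a : ℕ → ℝ} {K : ℝ}
    (hadd : ∀ m n, a m + a n ≤ a (m + n)) (hle : ∀ n, a n ≤ K * n) :
    ∃ l, Tendsto (fun n => a n / n) atTop (𝓝 l) := by
  have hsub : Subadditive (-a) := fun m n => by
    simp only [Pi.neg_apply]; linarith [hadd m n]
  have hbdd : BddBelow (Set.range fun n => (-a) n / n) := by
    refine ⟨-|K|, ?_⟩
    rintro _ ⟨n, rfl⟩
    simp only [Pi.neg_apply, neg_div, neg_le_neg_iff]
    exact div_le_of_le_mul₀ n.cast_nonneg (abs_nonneg K)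
      ((hle n).trans (mul_le_mul_of_nonneg_right (le_abs_self K) n.cast_nonneg))
  exact ⟨-hsub.lim, by simpa [neg_div] using (hsub.tendsto_lim hbdd).neg⟩

theorem exists_tendsto_div_of_add_le_add_one {φ : ℕ → ℝ} {K : ℝ}
    (hadd : ∀ m n, φ m + φ n ≤ φ (m + n + 1)) (hle : ∀ n, φ n ≤ K * (n + 1)) :
    ∃ l, Tendsto (fun n => φ n / n) atTop (𝓝 l) := by
  let a : ℕ → ℝ := fun n => match n with
    | 0 => 0
    | k + 1 => φ k
  have hadd' : ∀ m n, a m + a n ≤ a (m + n) := by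
    rintro (_ | m) (_ | n)
    · simp [a]
    · simp [a]
    · simp [a]
    · simpa [a, show m + 1 + (n + 1) = m + n + 1 + 1 by omega] using hadd m n
  have hle' : ∀ n, a n ≤ K * n := by
    rintro (_ | n)
    · simp [a]
    · simpa [a] using hle n
  obtain ⟨l, hl⟩ := exists_tendsto_div_of_superadditive hadd' hle'
  have hratio : Tendsto (fun n : ℕ => ((n : ℝ) + 1) / n) atTop (𝓝 1) := by
    simpa [inv_div] using (tendsto_natCast_div_add_atTop (1 : ℝ)).inv₀ one_ne_zero
  refine ⟨l, ?_⟩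
  have := ((tendsto_add_atTop_iff_nat 1).2 hl).mul hratio
  rw [mul_one] at this
  refine this.congr fun n => ?_
  simp only [a, Nat.cast_add, Nat.cast_one]
  exact div_mul_div_cancel₀ (by positivity)

lemma toR3_add (x z : ℤ × ℤ × ℤ) : toR3 (x + z) = toR3 x + toR3 z := by
  ext i
  fin_cases i <;> simp [toR3]

lemma P2z_add_vertical (x : ℤ × ℤ × ℤ) (k : ℤ) : P2z (x + (0, 0, k)) = P2z x := by
  simp [P2z]

lemma Eslab_add_vertical (c : EuclideanSpace ℝ (Fin 3) → ℝ) (N M k : ℤ)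
    (u : ℤ × ℤ × ℤ → ℝ) (O : Set (EuclideanSpace ℝ (Fin 2))) :
    Eslab c N M (fun x => u (x + (0, 0, k))) O = Eslab c (N + k) (M + k) u O := by
  unfold Eslab
  symm
  rw [← (Equiv.addRight ((0, 0, k) : ℤ × ℤ × ℤ)).tsum_eq]
  refine tsum_congr fun x => ?_
  rw [← (Equiv.addRight ((0, 0, k) : ℤ × ℤ × ℤ)).tsum_eq]
  refine tsum_congr fun y => ?_
  simp only [Equiv.coe_addRight, toR3_add, add_sub_add_right_eq_sub, P2z_add_vertical]
  refine if_congr ?_ rfl rfl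
  simp only [Prod.snd_add]
  constructor <;> rintro ⟨h₁, h₂, h₃, h₄, hO⟩ <;> exact ⟨by omega, by omega, by omega, by omega, hO⟩

lemma BCslab.comp_add_vertical {L : ℝ} {ν : EuclideanSpace ℝ (Fin 2)} {t : ℝ}
    {u : ℤ × ℤ × ℤ → ℝ} (hu : BCslab L ν t u) (k : ℤ) :
    BCslab L ν t (fun x => u (x + (0, 0, k))) :=
  ⟨fun x => hu.1 _, fun x hx => by
    rw [← P2z_add_vertical x k] at hx ⊢; exact hu.2 _ hx⟩

lemma Eslab_add_Eslab_le (c : EuclideanSpace ℝ (Fin 3) → ℝ) {N M P : ℤ}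
    (hNM : N ≤ M + 1) (hMP : M ≤ P) (u : ℤ × ℤ × ℤ → ℝ) (O : Set (EuclideanSpace ℝ (Fin 2))) :
    Eslab c N M u O + Eslab c (M + 1) P u O ≤ Eslab c N P u O := by
  unfold Eslab
  rw [← ENNReal.tsum_add]
  refine ENNReal.tsum_le_tsum fun x => ?_
  rw [← ENNReal.tsum_add]
  refine ENNReal.tsum_le_tsum fun y => ?_
  split_ifs <;> simp_all <;> omega

lemma iInf_Eslab_add_le (c : EuclideanSpace ℝ (Fin 3) → ℝ) (L : ℝ)
    (ν : EuclideanSpace ℝ (Fin 2)) (t : ℝ) (m n : ℕ) :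
    (⨅ u : {u : ℤ × ℤ × ℤ → ℝ // BCslab L ν t u}, Eslab c 0 m u (sqQ ν t)) +
        ⨅ u : {u : ℤ × ℤ × ℤ → ℝ // BCslab L ν t u}, Eslab c 0 n u (sqQ ν t) ≤
      ⨅ u : {u : ℤ × ℤ × ℤ → ℝ // BCslab L ν t u},
        Eslab c 0 ((m + n + 1 : ℕ) : ℤ) u (sqQ ν t) := by
  refine le_iInf fun u => ?_
  have hshift : Eslab c 0 n (fun x => u.1 (x + (0, 0, (m + 1 : ℤ)))) (sqQ ν t) =
      Eslab c (m + 1) ((m + n + 1 : ℕ) : ℤ) u (sqQ ν t) := by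
    rw [Eslab_add_vertical]; push_cast; ring_nf
  calc _ ≤ Eslab c 0 m u (sqQ ν t) + Eslab c (m + 1) ((m + n + 1 : ℕ) : ℤ) u (sqQ ν t) :=
        add_le_add (iInf_le _ u) (hshift ▸ iInf_le
          (fun v : {u : ℤ × ℤ × ℤ → ℝ // BCslab L ν t u} => Eslab c 0 n v (sqQ ν t))
          ⟨_, u.2.comp_add_vertical ((m : ℤ) + 1)⟩)
    _ ≤ _ := Eslab_add_Eslab_le c (by omega) (by omega) u _

lemma mSlab_add_le (c : EuclideanSpace ℝ (Fin 3) → ℝ) (L : ℝ)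
    (ν : EuclideanSpace ℝ (Fin 2)) (t : ℝ) (m n : ℕ)
    (hfin : (⨅ u : {u : ℤ × ℤ × ℤ → ℝ // BCslab L ν t u},
      Eslab c 0 ((m + n + 1 : ℕ) : ℤ) u (sqQ ν t)) ≠ ⊤) :
    mSlab c L ν 0 m t + mSlab c L ν 0 n t ≤ mSlab c L ν 0 ((m + n + 1 : ℕ) : ℤ) t := by
  have h := iInf_Eslab_add_le c L ν t m n
  have hsum := ne_top_of_le_ne_top hfin h
  unfold mSlab
  rw [← ENNReal.toReal_add (ENNReal.add_ne_top.1 hsum).1 (ENNReal.add_ne_top.1 hsum).2]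
  exact ENNReal.toReal_mono hfin h

lemma abs_inner_le_dist_of_u0_ne {ν p q : EuclideanSpace ℝ (Fin 2)} (h : u0 ν p ≠ u0 ν q) :
    |inner ℝ p ν| ≤ dist p q * ‖ν‖ := by
  have hsign : |inner ℝ p ν| ≤ |inner ℝ p ν - inner ℝ q ν| := by
    unfold u0 at h
    split_ifs at h with hp hq hq
    · exact absurd rfl h
    · rw [abs_of_nonneg hp, abs_of_pos (by linarith)]; linarith
    · rw [abs_of_neg (not_le.1 hp), abs_of_neg (by linarith)]; linarith
    · exact absurd rfl h
  rw [← inner_sub_left] at hsign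
  exact hsign.trans (dist_eq_norm p q ▸ abs_real_inner_le_norm _ _)

lemma dist_toR2_P2z_le (x y : ℤ × ℤ × ℤ) :
    dist (toR2 (P2z x)) (toR2 (P2z y)) ≤ dist (toR3 x) (toR3 y) := by
  simp only [EuclideanSpace.dist_eq, Fin.sum_univ_succ, Fin.sum_univ_zero]
  refine Real.sqrt_le_sqrt ?_
  simp [toR2, toR3, P2z]

lemma abs_sub_le_dist_toR3 (x y : ℤ × ℤ × ℤ) :
    |(y.1 - x.1 : ℝ)| ≤ dist (toR3 x) (toR3 y) ∧ |(y.2.1 - x.2.1 : ℝ)| ≤ dist (toR3 x) (toR3 y) ∧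
      |(y.2.2 - x.2.2 : ℝ)| ≤ dist (toR3 x) (toR3 y) := by
  have h := fun i => PiLp.norm_apply_le (toR3 y - toR3 x) i
  rw [dist_comm, dist_eq_norm]
  refine ⟨?_, ?_, ?_⟩
  · simpa [toR3] using h 0
  · simpa [toR3] using h 1
  · simpa [toR3] using h 2

lemma tsum_tsum_le_card_mul_card {α : Type*} [AddCommGroup α] {f : α → α → ℝ≥0∞}
    {A D : Finset α} {C : ℝ≥0∞} (hsupp : ∀ x y, f x y ≠ 0 → x ∈ A ∧ y - x ∈ D)
    (hC : ∀ x y, f x y ≤ C) :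
    ∑' x, ∑' y, f x y ≤ A.card * D.card * C := by
  have hinner : ∀ x, ∑' y, f x y = ∑ d ∈ D, f x (x + d) := fun x => by
    rw [← (Equiv.addLeft x).tsum_eq]
    exact tsum_eq_sum fun d hd => by_contra fun h => hd (by simpa using (hsupp x _ h).2)
  rw [tsum_eq_sum (s := A) fun x hx => ENNReal.tsum_eq_zero.2 fun y =>
    by_contra fun h => hx (hsupp x y h).1]
  calc ∑ x ∈ A, ∑' y, f x y ≤ ∑ _x ∈ A, ∑ _d ∈ D, C :=
        Finset.sum_le_sum fun x _ => (hinner x).le.trans (Finset.sum_le_sum fun d _ => hC _ _)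
    _ = A.card * D.card * C := by simp [mul_assoc]

lemma card_le_of_abs_mul_add_lt {a w r : ℝ} (ha : a ≠ 0) (hr : 0 ≤ r) {s : Finset ℤ}
    (hs : ∀ i ∈ s, |i * a + w| < r) : (s.card : ℝ) ≤ 2 * r / |a| + 1 := by
  rcases s.eq_empty_or_nonempty with rfl | hne
  · simp; positivity
  set m := s.min' hne
  set k := ⌊2 * r / |a|⌋
  have hsub : s ⊆ Finset.Icc m (m + k) := fun i hi => by
    have hmi : m ≤ i := s.min'_le i hi
    have hgap : ((i - m : ℤ) : ℝ) * |a| < 2 * r := calc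
      ((i - m : ℤ) : ℝ) * |a| = |(i * a + w) - (m * a + w)| := by
        rw [← abs_of_nonneg (by exact_mod_cast sub_nonneg.2 hmi : (0 : ℝ) ≤ ((i - m : ℤ) : ℝ)),
          ← abs_mul]
        push_cast; ring_nf
      _ ≤ |i * a + w| + |m * a + w| := abs_sub _ _
      _ < 2 * r := by linarith [hs i hi, hs m (s.min'_mem hne)]
    have := Int.le_floor.2 ((lt_div_iff₀ (abs_pos.2 ha)).2 hgap).le
    exact Finset.mem_Icc.2 ⟨hmi, by omega⟩
  have hk : 0 ≤ k := Int.floor_nonneg.2 (by positivity)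
  have hcard : (s.card : ℤ) ≤ k + 1 := calc
    (s.card : ℤ) ≤ (Finset.Icc m (m + k)).card := by exact_mod_cast Finset.card_le_card hsub
    _ = k + 1 := by rw [Int.card_Icc]; omega
  calc (s.card : ℝ) = ((s.card : ℤ) : ℝ) := (Int.cast_natCast _).symm
    _ ≤ k + 1 := by exact_mod_cast hcard
    _ ≤ 2 * r / |a| + 1 := by linarith [Int.floor_le (2 * r / |a|)]

lemma card_le_of_abs_mul_add_mul_lt {a b r : ℝ} (ha : a ≠ 0) (hr : 0 ≤ r) {T : ℕ}
    {s : Finset (ℤ × ℤ)} (hs : ∀ p ∈ s, |p.1 * a + p.2 * b| < r ∧ |p.2| ≤ T) :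
    (s.card : ℝ) ≤ (2 * T + 1) * (2 * r / |a| + 1) := by
  have hmaps : Set.MapsTo Prod.snd s (Finset.Icc (-T : ℤ) T) := fun p hp =>
    Finset.mem_Icc.2 (abs_le.1 (hs p hp).2)
  have hfiber : ∀ j : ℤ, ((s.filter fun p => p.2 = j).card : ℝ) ≤ 2 * r / |a| + 1 := by
    intro j
    rw [← Finset.card_image_of_injOn (f := Prod.fst) fun p hp q hq hpq =>
      Prod.ext hpq (((Finset.mem_filter.1 hp).2).trans (Finset.mem_filter.1 hq).2.symm)]
    refine card_le_of_abs_mul_add_lt (w := j * b) ha hr fun i hi => ?_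
    obtain ⟨p, hp, rfl⟩ := Finset.mem_image.1 hi
    obtain ⟨hps, rfl⟩ := Finset.mem_filter.1 hp
    exact (hs p hps).1
  rw [Finset.card_eq_sum_card_fiberwise hmaps, Nat.cast_sum]
  calc _ ≤ ∑ _j ∈ Finset.Icc (-T : ℤ) T, (2 * r / |a| + 1) := Finset.sum_le_sum fun j _ => hfiber j
    _ = (2 * T + 1) * (2 * r / |a| + 1) := by
      rw [Finset.sum_const, nsmul_eq_mul, Int.card_Icc]
      congr 1
      rw [show (T : ℤ) + 1 - -T = ((2 * T + 1 : ℕ) : ℤ) by push_cast; ring, Int.toNat_natCast]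
      push_cast; ring

lemma card_le_of_abs_mul_add_mul_lt_of_sq_add_sq {a b r : ℝ} (hab : a ^ 2 + b ^ 2 = 1)
    (hr : 0 ≤ r) {T : ℕ} {s : Finset (ℤ × ℤ)}
    (hs : ∀ p ∈ s, |p.1 * a + p.2 * b| < r ∧ |p.1| ≤ T ∧ |p.2| ≤ T) :
    (s.card : ℝ) ≤ (2 * T + 1) * (3 * r + 1) := by
  wlog hba : |b| ≤ |a| generalizing a b s
  · rw [← Finset.card_image_of_injective s Prod.swap_injective]
    refine this (a := b) (b := a) (by linarith) (fun q hq => ?_) (le_of_not_ge hba)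
    obtain ⟨p, hp, rfl⟩ := Finset.mem_image.1 hq
    obtain ⟨h, h1, h2⟩ := hs p hp
    exact ⟨by rwa [add_comm], h2, h1⟩
  have ha2 : 1 ≤ 2 * a ^ 2 := by nlinarith [sq_abs a, sq_abs b, abs_nonneg b]
  have ha : 0 < |a| := by nlinarith [sq_abs a, abs_nonneg a]
  have hdiv : 2 * r / |a| ≤ 3 * r := by
    rw [div_le_iff₀ ha]
    nlinarith [sq_abs a, abs_nonneg a]
  calc (s.card : ℝ) ≤ (2 * T + 1) * (2 * r / |a| + 1) :=
        card_le_of_abs_mul_add_mul_lt (abs_pos.1 ha) hr fun p hp => ⟨(hs p hp).1, (hs p hp).2.2⟩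
    _ ≤ (2 * T + 1) * (3 * r + 1) := by gcongr

lemma inner_toR2 (p : ℤ × ℤ) (v : EuclideanSpace ℝ (Fin 2)) :
    inner ℝ (toR2 p) v = p.1 * v 0 + p.2 * v 1 := by
  simp [toR2, PiLp.inner_apply, Fin.sum_univ_two]
  ring

lemma inner_toR2_rotDir (p : ℤ × ℤ) (ν : EuclideanSpace ℝ (Fin 2)) :
    inner ℝ (toR2 p) (rotDir ν) = p.2 * ν 0 - p.1 * ν 1 := by
  simp [toR2, rotDir, PiLp.inner_apply, Fin.sum_univ_two]
  ring

lemma sq_add_sq_of_norm_eq_one {ν : EuclideanSpace ℝ (Fin 2)} (hν : ‖ν‖ = 1) :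
    ν 0 ^ 2 + ν 1 ^ 2 = 1 := by
  simpa [EuclideanSpace.real_norm_sq_eq, Fin.sum_univ_two, hν] using
    (EuclideanSpace.real_norm_sq_eq ν).symm

lemma abs_le_natFloor {z : ℤ} {r : ℝ} (h : |(z : ℝ)| ≤ r) : |z| ≤ ⌊r⌋₊ := by
  rw [Int.natCast_floor_eq_floor ((abs_nonneg _).trans h), Int.le_floor]
  exact_mod_cast h

lemma abs_le_natFloor_of_toR2_mem_sqQ {ν : EuclideanSpace ℝ (Fin 2)} (hν : ‖ν‖ = 1)
    {t : ℝ} {p : ℤ × ℤ} (hp : toR2 p ∈ sqQ ν t) : |p.1| ≤ ⌊t⌋₊ ∧ |p.2| ≤ ⌊t⌋₊ := by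
  obtain ⟨h₁, h₂⟩ := hp
  rw [inner_toR2] at h₁
  rw [inner_toR2_rotDir] at h₂
  have hν2 := sq_add_sq_of_norm_eq_one hν
  have hrot : (p.1 : ℝ) ^ 2 + (p.2 : ℝ) ^ 2 =
      (p.1 * ν 0 + p.2 * ν 1) ^ 2 + (p.2 * ν 0 - p.1 * ν 1) ^ 2 := by
    linear_combination (-((p.1 : ℝ) ^ 2 + (p.2 : ℝ) ^ 2)) * hν2
  have hsq : (p.1 : ℝ) ^ 2 + (p.2 : ℝ) ^ 2 ≤ t ^ 2 := by
    rw [hrot]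
    nlinarith [sq_abs (p.1 * ν 0 + p.2 * ν 1), sq_abs (p.2 * ν 0 - p.1 * ν 1),
      abs_nonneg (p.1 * ν 0 + p.2 * ν 1), abs_nonneg (p.2 * ν 0 - p.1 * ν 1)]
  have ht : 0 ≤ t := by linarith [abs_nonneg (p.1 * ν 0 + p.2 * ν 1)]
  exact ⟨abs_le_natFloor (abs_le_of_sq_le_sq (by nlinarith) ht),
    abs_le_natFloor (abs_le_of_sq_le_sq (by nlinarith) ht)⟩

noncomputable def latticeStrip (ν : EuclideanSpace ℝ (Fin 2)) (r : ℝ) (T : ℕ) : Finset (ℤ × ℤ) :=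
  (Finset.Icc (-T : ℤ) T ×ˢ Finset.Icc (-T : ℤ) T).filter fun p => |inner ℝ (toR2 p) ν| < r

lemma card_latticeStrip_le {ν : EuclideanSpace ℝ (Fin 2)} (hν : ‖ν‖ = 1) {r : ℝ} (hr : 0 ≤ r)
    (T : ℕ) : ((latticeStrip ν r T).card : ℝ) ≤ (2 * T + 1) * (3 * r + 1) := by
  refine card_le_of_abs_mul_add_mul_lt_of_sq_add_sq (sq_add_sq_of_norm_eq_one hν) hr
    fun p hp => ?_
  simp only [latticeStrip, Finset.mem_filter, Finset.mem_product, Finset.mem_Icc] at hp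
  rw [← inner_toR2]
  exact ⟨hp.2, abs_le.2 hp.1.1, abs_le.2 hp.1.2⟩

lemma P2z_mem_latticeStrip {ν : EuclideanSpace ℝ (Fin 2)} (hν : ‖ν‖ = 1) {L t : ℝ}
    {x y : ℤ × ℤ × ℤ} (hx : toR2 (P2z x) ∈ sqQ ν t) (hxy : dist (toR3 x) (toR3 y) < L)
    (hu : u0 ν (toR2 (P2z x)) ≠ u0 ν (toR2 (P2z y))) : P2z x ∈ latticeStrip ν L ⌊t⌋₊ := by
  obtain ⟨h₁, h₂⟩ := abs_le_natFloor_of_toR2_mem_sqQ hν hx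
  have hinner : |inner ℝ (toR2 (P2z x)) ν| < L := by
    refine (abs_inner_le_dist_of_u0_ne hu).trans_lt ?_
    rw [hν, mul_one]
    exact (dist_toR2_P2z_le x y).trans_lt hxy
  simp only [latticeStrip, Finset.mem_filter, Finset.mem_product, Finset.mem_Icc]
  exact ⟨⟨abs_le.1 h₁, abs_le.1 h₂⟩, hinner⟩

noncomputable def cube (k : ℕ) : Finset (ℤ × ℤ × ℤ) :=
  Finset.Icc (-k : ℤ) k ×ˢ Finset.Icc (-k : ℤ) k ×ˢ Finset.Icc (-k : ℤ) k

lemma card_cube (k : ℕ) : (cube k).card = (2 * k + 1) ^ 3 := by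
  simp only [cube, Finset.card_product, Int.card_Icc]
  rw [show (k : ℤ) + 1 - -k = ((2 * k + 1 : ℕ) : ℤ) by push_cast; ring, Int.toNat_natCast]
  ring

lemma sub_mem_cube_of_dist_lt {x y : ℤ × ℤ × ℤ} {L : ℝ} (hxy : dist (toR3 x) (toR3 y) < L) :
    y - x ∈ cube ⌊L⌋₊ := by
  obtain ⟨h₁, h₂, h₃⟩ := abs_sub_le_dist_toR3 x y
  have e₁ := abs_le.1 (abs_le_natFloor (r := L) (z := y.1 - x.1) (by push_cast; linarith))
  have e₂ := abs_le.1 (abs_le_natFloor (r := L) (z := y.2.1 - x.2.1) (by push_cast; linarith))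
  have e₃ := abs_le.1 (abs_le_natFloor (r := L) (z := y.2.2 - x.2.2) (by push_cast; linarith))
  simp only [cube, Finset.mem_product, Finset.mem_Icc, Prod.fst_sub, Prod.snd_sub]
  omega

lemma BCslab_u0 (L : ℝ) (ν : EuclideanSpace ℝ (Fin 2)) (t : ℝ) :
    BCslab L ν t fun x => u0 ν (toR2 (P2z x)) :=
  ⟨fun x => by dsimp only; unfold u0; split_ifs <;> simp, fun _ _ => rfl⟩

lemma abs_u0_sub_u0_le (ν p q : EuclideanSpace ℝ (Fin 2)) : |u0 ν p - u0 ν q| ≤ 2 := by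
  unfold u0; split_ifs <;> norm_num

lemma Eslab_u0_le {c : EuclideanSpace ℝ (Fin 3) → ℝ} {L Cbar : ℝ} (hL : 0 ≤ L)
    (hCbar : 0 ≤ Cbar) (hc_bd : ∀ z, c z ≤ Cbar) (hc_range : ∀ z, L ≤ ‖z‖ → c z = 0)
    {ν : EuclideanSpace ℝ (Fin 2)} (hν : ‖ν‖ = 1) (M : ℕ) {t : ℝ} (ht : 0 ≤ t) :
    Eslab c 0 M (fun x => u0 ν (toR2 (P2z x))) (sqQ ν t) ≤ ENNReal.ofReal
      ((M + 1) * ((2 * t + 1) * (3 * L + 1)) * (2 * ⌊L⌋₊ + 1) ^ 3 * (2 * Cbar)) := by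
  set A : Finset (ℤ × ℤ × ℤ) := (latticeStrip ν L ⌊t⌋₊ ×ˢ Finset.Icc (0 : ℤ) M).image
    fun q => (q.1.1, q.1.2, q.2)
  refine (tsum_tsum_le_card_mul_card (A := A) (D := cube ⌊L⌋₊) (C := ENNReal.ofReal (2 * Cbar))
    (fun x y h => ?_) (fun x y => ?_)).trans ?_
  · split_ifs at h with hcond
    swap; · exact absurd rfl h
    have hpos := ENNReal.ofReal_pos.1 (pos_iff_ne_zero.2 h)
    have hxy : dist (toR3 x) (toR3 y) < L := by
      rw [dist_eq_norm]; by_contra! hge; simp [hc_range _ hge] at hpos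
    have hu : u0 ν (toR2 (P2z x)) ≠ u0 ν (toR2 (P2z y)) := by
      intro heq; simp [heq] at hpos
    refine ⟨Finset.mem_image.2 ⟨(P2z x, x.2.2), ?_, rfl⟩, sub_mem_cube_of_dist_lt hxy⟩
    exact Finset.mem_product.2
      ⟨P2z_mem_latticeStrip hν hcond.2.2.2.2.1 hxy hu, Finset.mem_Icc.2 ⟨hcond.1, hcond.2.1⟩⟩
  · split_ifs
    · refine ENNReal.ofReal_le_ofReal ?_
      nlinarith [hc_bd (toR3 x - toR3 y), abs_u0_sub_u0_le ν (toR2 (P2z x)) (toR2 (P2z y)),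
        abs_nonneg (u0 ν (toR2 (P2z x)) - u0 ν (toR2 (P2z y)))]
    · exact zero_le
  · have hA : (A.card : ℝ) ≤ (M + 1) * ((2 * t + 1) * (3 * L + 1)) := by
      calc (A.card : ℝ) ≤ (latticeStrip ν L ⌊t⌋₊ ×ˢ Finset.Icc (0 : ℤ) M).card := by
            exact_mod_cast Finset.card_image_le
        _ = (M + 1) * (latticeStrip ν L ⌊t⌋₊).card := by simp [Finset.card_product, mul_comm]
        _ ≤ (M + 1) * ((2 * t + 1) * (3 * L + 1)) := by
            gcongr
            exact (card_latticeStrip_le hν hL _).trans (by gcongr; exact Nat.floor_le ht)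
    rw [card_cube, ← ENNReal.ofReal_natCast, ← ENNReal.ofReal_natCast,
      ← ENNReal.ofReal_mul (by positivity), ← ENNReal.ofReal_mul (by positivity)]
    exact ENNReal.ofReal_le_ofReal (by push_cast; gcongr)

lemma exists_iInf_Eslab_le {c : EuclideanSpace ℝ (Fin 3) → ℝ} {L Cbar : ℝ} (hL : 0 ≤ L)
    (hCbar : 0 ≤ Cbar) (hc_bd : ∀ z, c z ≤ Cbar) (hc_range : ∀ z, L ≤ ‖z‖ → c z = 0)
    {ν : EuclideanSpace ℝ (Fin 2)} (hν : ‖ν‖ = 1) :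
    ∃ K : ℝ, 0 ≤ K ∧ ∀ (M : ℕ) (t : ℝ), 1 ≤ t →
      (⨅ u : {u : ℤ × ℤ × ℤ → ℝ // BCslab L ν t u}, Eslab c 0 M u (sqQ ν t)) ≤
        ENNReal.ofReal (K * (M + 1) * t) := by
  refine ⟨3 * (3 * L + 1) * (2 * ⌊L⌋₊ + 1) ^ 3 * (2 * Cbar), by positivity, fun M t ht => ?_⟩
  have hu0 := Eslab_u0_le hL hCbar hc_bd hc_range hν M (by linarith : (0 : ℝ) ≤ t)
  refine (iInf_le_of_le ⟨_, BCslab_u0 L ν t⟩ hu0).trans (ENNReal.ofReal_le_ofReal ?_)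
  have hP : 0 ≤ (M + 1 : ℝ) * (3 * L + 1) * (2 * ⌊L⌋₊ + 1) ^ 3 * (2 * Cbar) := by positivity
  linarith [mul_le_mul_of_nonneg_left (by linarith : 2 * t + 1 ≤ 3 * t) hP]

theorem surface_tension_per_layer_exists_general
    (L Cbar : ℝ) (hL : 0 < L) (hCbar : 0 < Cbar)
    (c : EuclideanSpace ℝ (Fin 3) → ℝ)
    (hc_bd : ∀ z, c z ≤ Cbar)
    (hc_range : ∀ z : EuclideanSpace ℝ (Fin 3), L ≤ ‖z‖ → c z = 0)
    (ν : EuclideanSpace ℝ (Fin 2)) (hν : ‖ν‖ = 1)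
    (φ1M : ℕ → ℝ)
    (hφ1M : ∀ M : ℕ, Tendsto (fun t : ℝ => mSlab c L ν 0 (M : ℤ) t / t)
      atTop (nhds (φ1M M))) :
    ∃ φ1 : ℝ, Tendsto (fun M : ℕ => φ1M M / (M : ℝ)) atTop (nhds φ1) := by
  obtain ⟨K, hK0, hK⟩ := exists_iInf_Eslab_le hL.le hCbar.le hc_bd hc_range hν
  refine exists_tendsto_div_of_add_le_add_one (K := K) (fun m n => ?_) (fun M => ?_)
  · refine le_of_tendsto_of_tendsto ((hφ1M m).add (hφ1M n)) (hφ1M (m + n + 1)) ?_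
    filter_upwards [eventually_ge_atTop 1] with t ht
    rw [← add_div]
    have hfin := ne_top_of_le_ne_top ENNReal.ofReal_ne_top (hK (m + n + 1) t ht)
    exact div_le_div_of_nonneg_right (mSlab_add_le c L ν t m n hfin) (by linarith)
  · refine le_of_tendsto (hφ1M M) ?_
    filter_upwards [eventually_ge_atTop 1] with t ht
    rw [div_le_iff₀ (by linarith)]
    exact ENNReal.toReal_le_of_le_ofReal (by positivity) (hK M t ht)

/-- **Existence of the surface tension per unit thickness** (Lemma `auxlemma`): if for
every `M` the surface tension `φ^{1,M}(ν) = lim_{t→∞} m_{[0,M]}(u_{0,ν},Q_ν(0,t))/t`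
exists, then `φ¹(ν) = lim_{M→∞} φ^{1,M}(ν)/M` exists (and is finite, being a real limit). -/
theorem surface_tension_per_layer_exists
    (L Cbar c0 : ℝ) (hL : 0 < L) (hCbar : 0 < Cbar) (hc0 : 0 < c0)
    (c : EuclideanSpace ℝ (Fin 3) → ℝ)
    (hc_nonneg : ∀ z, 0 ≤ c z)
    (hc_bd : ∀ z, c z ≤ Cbar)
    (hc_range : ∀ z : EuclideanSpace ℝ (Fin 3), L ≤ ‖z‖ → c z = 0)
    (hc_coer : ∀ z : EuclideanSpace ℝ (Fin 3), ‖z‖ = 1 → c0 ≤ c z)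
    (ν : EuclideanSpace ℝ (Fin 2)) (hν : ‖ν‖ = 1)
    (φ1M : ℕ → ℝ)
    (hφ1M : ∀ M : ℕ, Tendsto (fun t : ℝ => mSlab c L ν 0 (M : ℤ) t / t)
      atTop (nhds (φ1M M))) :
    ∃ φ1 : ℝ, Tendsto (fun M : ℕ => φ1M M / (M : ℝ)) atTop (nhds φ1) :=
  surface_tension_per_layer_exists_general L Cbar hL hCbar c hc_bd hc_range ν hν φ1M hφ1M
end

section
/- Suppose u : ℤ²_M → {−1,1} and a finite set Γ ⊂ ℤ² are such that E_M(u,Γ) ≤ E_M(v,Γ) for all v : ℤ²_M → {−1,1} with v = u on {z ∈ ℤ²_M : ∃ z′ ∈ (ℤ²∖Γ)_M with |z−z′| ≤ L}. Then for every subset Γ′ ⊂ Γ the same conclusion holds with Γ replaced by Γ′: E_M(u,Γ′) ≤ E_M(v,Γ′) for all v with v = u on {z ∈ ℤ²_M : ∃ z′ ∈ (ℤ²∖Γ′)_M with |z−z′| ≤ L}. -/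
open scoped ENNReal Classical

/-- Membership in the slab `ℤ²_M = ℤ² × {0,…,M}`. -/
def inSlab (M : ℕ) (x : ℤ × ℤ × ℤ) : Prop := 0 ≤ x.2.2 ∧ x.2.2 ≤ (M : ℤ)

/-- The energy `E_M(u,Γ) = ∑_{x ∈ Γ_M} ∑_{y ∈ ℤ²_M} c(x-y)|u(x)-u(y)|`, valued in `[0,∞]`. -/
noncomputable def energyM (M : ℕ) (c : EuclideanSpace ℝ (Fin 3) → ℝ)
    (u : ℤ × ℤ × ℤ → ℝ) (Γ : Set (ℤ × ℤ)) : ℝ≥0∞ :=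
  ∑' x : ℤ × ℤ × ℤ, ∑' y : ℤ × ℤ × ℤ,
    if (x.1, x.2.1) ∈ Γ ∧ inSlab M x ∧ inSlab M y then
      ENNReal.ofReal (c (toR3 x - toR3 y) * |u x - u y|) else 0

lemma abs_comp_le (v : EuclideanSpace ℝ (Fin 3)) (i : Fin 3) : |v i| ≤ ‖v‖ := by
  rw [EuclideanSpace.norm_eq, ← Real.sqrt_sq_eq_abs]
  apply Real.sqrt_le_sqrt
  have := Finset.single_le_sum (f := fun j => ‖v j‖^2) (fun j _ => sq_nonneg _) (Finset.mem_univ i)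
  simpa [Real.norm_eq_abs, sq_abs] using this

lemma toR3_apply (x y : ℤ × ℤ × ℤ) :
    (toR3 x - toR3 y) 0 = (x.1 : ℝ) - y.1 ∧ (toR3 x - toR3 y) 1 = (x.2.1 : ℝ) - y.2.1
    ∧ (toR3 x - toR3 y) 2 = (x.2.2 : ℝ) - y.2.2 := by
  refine ⟨?_, ?_, ?_⟩ <;> simp [toR3, PiLp.sub_apply]

lemma energy_split (M : ℕ) (c : EuclideanSpace ℝ (Fin 3) → ℝ) (u : ℤ × ℤ × ℤ → ℝ)
    (Γ' Γ : Finset (ℤ × ℤ)) (h : Γ' ⊆ Γ) :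
    energyM M c u ↑Γ = energyM M c u ↑Γ' + energyM M c u ↑(Γ \ Γ') := by
  unfold energyM
  rw [← ENNReal.tsum_add]
  refine tsum_congr fun x => ?_
  rw [← ENNReal.tsum_add]
  refine tsum_congr fun y => ?_
  by_cases h1 : (x.1, x.2.1) ∈ Γ' <;> by_cases h2 : inSlab M x ∧ inSlab M y <;>
    by_cases h3 : (x.1, x.2.1) ∈ Γ <;>
    simp_all [Finset.mem_sdiff] <;> exact absurd (h h1) h3

lemma energy_congr (M : ℕ) (c : EuclideanSpace ℝ (Fin 3) → ℝ) (u v : ℤ × ℤ × ℤ → ℝ)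
    (Γ : Set (ℤ × ℤ))
    (h : ∀ x y : ℤ × ℤ × ℤ, (x.1, x.2.1) ∈ Γ → inSlab M x → inSlab M y →
      c (toR3 x - toR3 y) ≠ 0 → v x = u x ∧ v y = u y) :
    energyM M c v Γ = energyM M c u Γ := by
  unfold energyM
  refine tsum_congr fun x => tsum_congr fun y => ?_
  by_cases hcond : (x.1, x.2.1) ∈ Γ ∧ inSlab M x ∧ inSlab M y
  · by_cases hc : c (toR3 x - toR3 y) = 0
    · simp [hcond, hc]
    · obtain ⟨h1, h2⟩ := h x y hcond.1 hcond.2.1 hcond.2.2 hc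
      simp [hcond, h1, h2]
  · simp [hcond]

lemma energy_finite (M : ℕ) (c : EuclideanSpace ℝ (Fin 3) → ℝ) (L : ℝ)
    (hc_range : ∀ z : EuclideanSpace ℝ (Fin 3), L ≤ ‖z‖ → c z = 0)
    (u : ℤ × ℤ × ℤ → ℝ) (Γ : Finset (ℤ × ℤ)) : energyM M c u ↑Γ ≠ ∞ := by
  classical
  set K : ℤ := ⌈L⌉ with hKdef
  have hK : L ≤ (K : ℝ) := Int.le_ceil L
  set f : (ℤ × ℤ × ℤ) → (ℤ × ℤ × ℤ) → ℝ≥0∞ := fun x y =>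
    @ite _ ((x.1, x.2.1) ∈ (↑Γ : Set (ℤ × ℤ)) ∧ inSlab M x ∧ inSlab M y)
      (Classical.propDecidable _)
      (ENNReal.ofReal (c (toR3 x - toR3 y) * |u x - u y|)) 0 with hf
  set B : (ℤ × ℤ × ℤ) → Finset (ℤ × ℤ × ℤ) := fun x =>
    Finset.Icc (x.1 - K, x.2.1 - K, x.2.2 - K) (x.1 + K, x.2.1 + K, x.2.2 + K) with hB
  set Sx : Finset (ℤ × ℤ × ℤ) :=
    (Γ.image Prod.fst) ×ˢ ((Γ.image Prod.snd) ×ˢ Finset.Icc (0 : ℤ) (M : ℤ)) with hSx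
  have hinner : ∀ x, ∑' y, f x y = ∑ y ∈ B x, f x y := by
    intro x
    refine tsum_eq_sum fun y hy => ?_
    by_contra hne
    apply hy
    have hcond : ((x.1, x.2.1) ∈ (↑Γ : Set (ℤ × ℤ)) ∧ inSlab M x ∧ inSlab M y) := by
      by_contra hc
      simp only [hf] at hne
      rw [if_neg hc] at hne
      exact hne rfl
    have hpos : 0 < c (toR3 x - toR3 y) * |u x - u y| := by
      by_contra hle
      push_neg at hle
      simp [hf, hcond, ENNReal.ofReal_eq_zero.mpr hle] at hne
    have hcne : c (toR3 x - toR3 y) ≠ 0 := by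
      intro h0; rw [h0, zero_mul] at hpos; exact lt_irrefl _ hpos
    have hnorm : ‖toR3 x - toR3 y‖ < L := by
      by_contra hge; push_neg at hge; exact hcne (hc_range _ hge)
    obtain ⟨e0, e1, e2⟩ := toR3_apply x y
    have b0 : |(x.1 : ℝ) - y.1| < (K : ℝ) :=
      lt_of_le_of_lt (e0 ▸ abs_comp_le (toR3 x - toR3 y) 0) (lt_of_lt_of_le hnorm hK)
    have b1 : |(x.2.1 : ℝ) - y.2.1| < (K : ℝ) :=
      lt_of_le_of_lt (e1 ▸ abs_comp_le (toR3 x - toR3 y) 1) (lt_of_lt_of_le hnorm hK)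
    have b2 : |(x.2.2 : ℝ) - y.2.2| < (K : ℝ) :=
      lt_of_le_of_lt (e2 ▸ abs_comp_le (toR3 x - toR3 y) 2) (lt_of_lt_of_le hnorm hK)
    have i0 : |x.1 - y.1| < K := by exact_mod_cast (by push_cast; exact b0 : (|x.1 - y.1| : ℝ) < (K : ℝ))
    have i1 : |x.2.1 - y.2.1| < K := by exact_mod_cast (by push_cast; exact b1 : (|x.2.1 - y.2.1| : ℝ) < (K : ℝ))
    have i2 : |x.2.2 - y.2.2| < K := by exact_mod_cast (by push_cast; exact b2 : (|x.2.2 - y.2.2| : ℝ) < (K : ℝ))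
    have j0 := abs_lt.mp i0
    have j1 := abs_lt.mp i1
    have j2 := abs_lt.mp i2
    simp only [hB, Finset.mem_Icc, Prod.le_def]
    omega
  have houter : energyM M c u ↑Γ = ∑ x ∈ Sx, ∑ y ∈ B x, f x y := by
    rw [show energyM M c u ↑Γ = ∑' x, ∑' y, f x y from by unfold energyM; rw [hf]; exact tsum_congr fun x => tsum_congr fun y => by beta_reduce; split_ifs <;> rfl]
    rw [tsum_eq_sum (s := Sx) (fun x hx => ?_)]
    · exact Finset.sum_congr rfl fun x _ => hinner x
    · have : ∀ y, f x y = 0 := by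
        intro y
        rw [hf]
        simp only
        rw [if_neg]
        intro ⟨hmem, hsx, _⟩
        apply hx
        simp only [hSx, Finset.mem_product, Finset.mem_image, Finset.mem_Icc]
        exact ⟨⟨(x.1, x.2.1), hmem, rfl⟩, ⟨(x.1, x.2.1), hmem, rfl⟩, hsx.1, hsx.2⟩
      simp [this]
  rw [houter]
  refine (ENNReal.sum_lt_top.mpr fun x _ => (ENNReal.sum_lt_top.mpr fun y _ => ?_)).ne
  rw [hf]
  simp only
  split
  · exact ENNReal.ofReal_lt_top
  · exact ENNReal.zero_lt_top

/-- **Remark (monotonicity of the minimality property)**: if `u` minimizes `E_M(·,Γ)` among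
competitors agreeing with `u` near `(ℤ²∖Γ)_M`, then the same holds for every subset `Γ′ ⊆ Γ`. -/
theorem minimality_monotone
    (L Cbar c0 : ℝ) (hL : 0 < L) (hCbar : 0 < Cbar) (hc0 : 0 < c0)
    (c : EuclideanSpace ℝ (Fin 3) → ℝ)
    (hc_nonneg : ∀ z, 0 ≤ c z)
    (hc_bd : ∀ z, c z ≤ Cbar)
    (hc_range : ∀ z : EuclideanSpace ℝ (Fin 3), L ≤ ‖z‖ → c z = 0)
    (hc_coer : ∀ i : Fin 3,
      c0 ≤ c (EuclideanSpace.single i (1 : ℝ)) ∧ c0 ≤ c (-EuclideanSpace.single i (1 : ℝ)))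
    (M : ℕ) (u : ℤ × ℤ × ℤ → ℝ)
    (hu : ∀ x, inSlab M x → u x = 1 ∨ u x = -1)
    (Γ : Finset (ℤ × ℤ))
    (hmin : ∀ v : ℤ × ℤ × ℤ → ℝ, (∀ x, inSlab M x → v x = 1 ∨ v x = -1) →
      (∀ z, inSlab M z →
        (∃ z', inSlab M z' ∧ (z'.1, z'.2.1) ∉ Γ ∧ dist (toR3 z) (toR3 z') ≤ L) → v z = u z) →
      energyM M c u ↑Γ ≤ energyM M c v ↑Γ) :
    ∀ Γ' : Finset (ℤ × ℤ), Γ' ⊆ Γ →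
      ∀ v : ℤ × ℤ × ℤ → ℝ, (∀ x, inSlab M x → v x = 1 ∨ v x = -1) →
        (∀ z, inSlab M z →
          (∃ z', inSlab M z' ∧ (z'.1, z'.2.1) ∉ Γ' ∧ dist (toR3 z) (toR3 z') ≤ L) → v z = u z) →
        energyM M c u ↑Γ' ≤ energyM M c v ↑Γ' := by
  intro Γ' hsub v hv hvagree
  have hvΓ : ∀ z, inSlab M z →
      (∃ z', inSlab M z' ∧ (z'.1, z'.2.1) ∉ Γ ∧ dist (toR3 z) (toR3 z') ≤ L) → v z = u z := by
    rintro z hz ⟨z', h1, h2, h3⟩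
    exact hvagree z hz ⟨z', h1, fun hm => h2 (hsub hm), h3⟩
  have h1 := hmin v hv hvΓ
  have hcongr : energyM M c v ↑(Γ \ Γ') = energyM M c u ↑(Γ \ Γ') := by
    refine energy_congr M c u v _ fun x y hx hsx hsy hc => ?_
    have hxmem : (x.1, x.2.1) ∈ Γ \ Γ' := by exact_mod_cast hx
    have hxnot : (x.1, x.2.1) ∉ Γ' := (Finset.mem_sdiff.mp hxmem).2
    have hvx : v x = u x := by
      refine hvagree x hsx ⟨x, hsx, hxnot, ?_⟩
      rw [dist_self]; exact le_of_lt hL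
    have hnorm : ‖toR3 x - toR3 y‖ < L := by
      by_contra hge; push_neg at hge; exact hc (hc_range _ hge)
    have hvy : v y = u y := by
      refine hvagree y hsy ⟨x, hsx, hxnot, ?_⟩
      rw [dist_eq_norm, ← norm_neg]
      simp only [neg_sub]
      exact le_of_lt hnorm
    exact ⟨hvx, hvy⟩
  have hfin : energyM M c u ↑(Γ \ Γ') ≠ ∞ := energy_finite M c L hc_range u (Γ \ Γ')
  rw [energy_split M c u Γ' Γ hsub, energy_split M c v Γ' Γ hsub, hcongr] at h1
  exact (ENNReal.add_le_add_iff_right hfin).mp h1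
end
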